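/- arXiv:1510.04225 — 3 statements merged into one kernel-verified Lean document; each statement's English description precedes it below -/
import Mathlib

section
/- The sum (p_{k+1}^2 - 9) · ∏_{i=2}^{k} (1 - 2/p_i) tends to infinity as k → ∞, where p_i is the i-th prime. -/
/-!
Every factor of `∏ (1 - 2/m)` over odd `3 ≤ m ≤ N` lies in `[0, 1]`, and over all such `m` the
product telescopes to `1/N` (for odd `N`). Keeping only the odd primes therefore gives
`∏_{i=2}^k (1 - 2/p_i) ≥ 1/p_k`, so the expression is at least `(p_{k+1}^2 - 9)/p_k ≥ p_k - 3`.
-/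

open Filter Finset

theorem prod_range_one_sub_two_div_two_mul_add_three (n : ℕ) :
    ∏ j ∈ range n, (1 - 2 / (2 * j + 3 : ℝ)) = 1 / (2 * n + 1) := by
  induction n with
  | zero => simp
  | succ n ih =>
    rw [prod_range_succ, ih]
    push_cast
    field_simp
    ring

theorem one_div_le_prod_one_sub_two_div_of_odd {s : Finset ℕ} {N : ℕ} (hN : 0 < N)
    (hs : ∀ m ∈ s, Odd m ∧ 3 ≤ m ∧ m ≤ N) :
    1 / (N : ℝ) ≤ ∏ m ∈ s, (1 - 2 / (m : ℝ)) := by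
  set n := (N - 1) / 2
  set t := (range n).image (fun j => 2 * j + 3)
  have hst : s ⊆ t := by
    intro m hm
    obtain ⟨⟨j, rfl⟩, h3, hmN⟩ := hs m hm
    exact mem_image.2 ⟨j - 1, mem_range.2 (by omega), by omega⟩
  have ht : ∏ m ∈ t, (1 - 2 / (m : ℝ)) = 1 / (2 * n + 1) := by
    rw [prod_image fun _ _ _ _ h => by omega]
    push_cast
    exact prod_range_one_sub_two_div_two_mul_add_three n
  have hfactor : ∀ m ∈ t, 0 ≤ 1 - 2 / (m : ℝ) ∧ 1 - 2 / (m : ℝ) ≤ 1 := by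
    intro m hm
    obtain ⟨j, -, rfl⟩ := mem_image.1 hm
    push_cast
    constructor
    · rw [sub_nonneg, div_le_one (by positivity)]; linarith
    · have : 0 ≤ 2 / (2 * j + 3 : ℝ) := by positivity
      linarith
  calc 1 / (N : ℝ) ≤ 1 / (2 * n + 1) :=
        one_div_le_one_div_of_le (by positivity) (by exact_mod_cast (by omega : 2 * n + 1 ≤ N))
    _ = ∏ m ∈ t, (1 - 2 / (m : ℝ)) := ht.symm
    _ ≤ ∏ m ∈ s, (1 - 2 / (m : ℝ)) :=
        prod_le_prod_of_subset_of_le_one hst (fun m hm => (hfactor m hm).1)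
          (fun m hm _ => (hfactor m hm).2)

local notation "p" => Nat.nth Nat.Prime

theorem one_div_nth_prime_le_prod_one_sub_two_div (k : ℕ) :
    1 / (p k : ℝ) ≤ ∏ i ∈ Icc 2 k, (1 - 2 / (p (i - 1) : ℝ)) := by
  have hinj : Set.InjOn (fun i => p (i - 1)) (Icc 2 k) := fun i hi j hj h => by
    simp only [coe_Icc, Set.mem_Icc] at hi hj
    have := Nat.nth_injective Nat.infinite_setOfPred_prime h
    omega
  rw [← prod_image (f := fun m : ℕ => 1 - 2 / (m : ℝ)) hinj]
  refine one_div_le_prod_one_sub_two_div_of_odd (Nat.prime_nth_prime k).pos fun m hm => ?_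
  obtain ⟨i, hi, rfl⟩ := mem_image.1 hm
  rw [mem_Icc] at hi
  have hlt : p (i - 1) < p k := Nat.nth_strictMono Nat.infinite_setOfPred_prime (by omega)
  have h3 : 3 ≤ p (i - 1) := by have := Nat.add_two_le_nth_prime (i - 1); omega
  exact ⟨(Nat.prime_nth_prime _).odd_of_ne_two (by omega), h3, hlt.le⟩

/-- `(p_{k+1}^2 - 9) · ∏_{i=2}^{k} (1 - 2/p_i) → ∞` as `k → ∞`, where `p_i` is the
`i`-th prime (so `p_{k+1} = Nat.nth Nat.Prime k`). -/
theorem stmt_13 :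
    Tendsto (fun k : ℕ =>
        ((Nat.nth Nat.Prime k : ℝ) ^ 2 - 9) *
          ∏ i ∈ Finset.Icc 2 k, (1 - 2 / (Nat.nth Nat.Prime (i - 1) : ℝ)))
      atTop atTop := by
  have hp : Tendsto (fun k => (p k : ℝ)) atTop atTop :=
    tendsto_natCast_atTop_atTop.comp
      (Nat.nth_strictMono Nat.infinite_setOfPred_prime).tendsto_atTop
  refine tendsto_atTop_mono' atTop ?_ (tendsto_atTop_add_const_right _ (-3) hp)
  filter_upwards [eventually_ge_atTop 1] with k hk
  have h3 : (3 : ℝ) ≤ p k := by exact_mod_cast (Nat.add_two_le_nth_prime k).trans' (by omega)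
  calc (p k : ℝ) + -3 ≤ ((p k : ℝ) ^ 2 - 9) * (1 / p k) := by
        rw [mul_one_div, le_div_iff₀ (by positivity)]
        nlinarith
    _ ≤ _ := mul_le_mul_of_nonneg_left (one_div_nth_prime_le_prod_one_sub_two_div k) (by nlinarith)
end

section
/- For all k ≥ 2, ∏_{i=2}^{k} (1 - 2/p_i) ≥ 2 · ∏_{i=1}^{k} (1 - 1/p_i)^2, where p_i denotes the i-th prime. -/
/-!
Write `a_i = 1 - 1/p_i`. Since `p_{i-1} + 1 ≤ p_i`, each factor satisfies
`1 - 2/p_i ≥ a_i a_{i-1}`, so the left side dominates `∏_{i≥2} a_i · ∏_{i≤k-1} a_i`.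
The right side is this same product times `2 a_1 a_k = a_k ≤ 1`, because `p_1 = 2`.
Only `p_1 = 2` and `p_{i-1} < p_i` are used, so the argument runs for any strictly
increasing sequence of naturals starting at 2.
-/

open Finset

theorem one_sub_one_div_mul_le {a b : ℝ} (ha : 0 < a) (hab : a + 1 ≤ b) :
    (1 - 1 / b) * (1 - 1 / a) ≤ 1 - 2 / b := by
  have hb : 0 < b := by linarith
  have hdiff : 1 - 2 / b - (1 - 1 / b) * (1 - 1 / a) = (b - a - 1) / (a * b) := by
    field_simp; ring
  rw [← sub_nonneg, hdiff]
  exact div_nonneg (by linarith) (by positivity)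

theorem prod_Icc_sub_one_eq_prod_range {M : Type*} [CommMonoid M] (f : ℕ → M) (a n : ℕ) :
    ∏ i ∈ Icc (a + 1) (n + a), f (i - 1) = ∏ j ∈ range n, f (j + a) := by
  rw [← Ico_add_one_right_eq_Icc, prod_Ico_eq_prod_range]
  refine prod_congr (by congr 1; omega) fun j _ => ?_
  congr 1; omega

theorem one_sub_one_div_nonneg_of_strictMono {q : ℕ → ℕ} (hq : StrictMono q) (h0 : 0 < q 0)
    (j : ℕ) : 0 ≤ 1 - 1 / (q j : ℝ) := by
  have : (1 : ℝ) ≤ q j := by exact_mod_cast h0.trans_le (hq.monotone j.zero_le)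
  exact sub_nonneg.2 ((div_le_one (by linarith)).2 this)

theorem prod_one_sub_one_div_mul_prod_le {q : ℕ → ℕ} (hq : StrictMono q)
    (h0 : 0 < q 0) (m : ℕ) :
    (∏ j ∈ range m, (1 - 1 / (q (j + 1) : ℝ))) * ∏ j ∈ range m, (1 - 1 / (q j : ℝ)) ≤
      ∏ j ∈ range m, (1 - 2 / (q (j + 1) : ℝ)) := by
  have factor_nonneg := one_sub_one_div_nonneg_of_strictMono hq h0
  rw [← prod_mul_distrib]
  refine prod_le_prod (fun j _ => mul_nonneg (factor_nonneg _) (factor_nonneg _)) fun j _ => ?_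
  exact one_sub_one_div_mul_le (by exact_mod_cast h0.trans_le (hq.monotone j.zero_le))
    (by exact_mod_cast hq (Nat.lt_succ_self j))

theorem two_mul_prod_sq_le_prod {q : ℕ → ℕ} (hq : StrictMono q) (h0 : q 0 = 2) (m : ℕ) :
    2 * ∏ j ∈ range (m + 1), (1 - 1 / (q j : ℝ)) ^ 2 ≤
      ∏ j ∈ range m, (1 - 2 / (q (j + 1) : ℝ)) := by
  have hpos : 0 < q 0 := h0 ▸ two_pos
  set A := ∏ j ∈ range m, (1 - 1 / (q (j + 1) : ℝ))
  set B := ∏ j ∈ range m, (1 - 1 / (q j : ℝ))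
  have hAB : 0 ≤ A * B := mul_nonneg
    (prod_nonneg fun j _ => one_sub_one_div_nonneg_of_strictMono hq hpos _)
    (prod_nonneg fun j _ => one_sub_one_div_nonneg_of_strictMono hq hpos _)
  have hlast : 1 - 1 / (q m : ℝ) ≤ 1 := sub_le_self _ (by positivity)
  calc 2 * ∏ j ∈ range (m + 1), (1 - 1 / (q j : ℝ)) ^ 2
      = 2 * (1 - 1 / (q 0 : ℝ)) * (1 - 1 / (q m : ℝ)) * (A * B) := by
        rw [prod_pow, sq]
        nth_rewrite 1 [prod_range_succ']
        rw [prod_range_succ]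
        ring
    _ = (1 - 1 / (q m : ℝ)) * (A * B) := by norm_num [h0]
    _ ≤ A * B := mul_le_of_le_one_left hAB hlast
    _ ≤ _ := prod_one_sub_one_div_mul_prod_le hq hpos m

/-- For all `k ≥ 2`, `∏_{i=2}^{k} (1 - 2/p_i) ≥ 2 · ∏_{i=1}^{k} (1 - 1/p_i)^2`,
where `p_i` denotes the `i`-th prime. -/
theorem stmt_14 (k : ℕ) (hk : 2 ≤ k) :
    ∏ i ∈ Finset.Icc 2 k, (1 - 2 / (Nat.nth Nat.Prime (i - 1) : ℝ)) ≥
      2 * ∏ i ∈ Finset.Icc 1 k, (1 - 1 / (Nat.nth Nat.Prime (i - 1) : ℝ)) ^ 2 := by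
  obtain ⟨m, rfl⟩ : ∃ m, k = m + 1 := ⟨k - 1, by omega⟩
  rw [ge_iff_le,
    prod_Icc_sub_one_eq_prod_range (fun j => 1 - 2 / (Nat.nth Nat.Prime j : ℝ)) 1 m,
    prod_Icc_sub_one_eq_prod_range (fun j => (1 - 1 / (Nat.nth Nat.Prime j : ℝ)) ^ 2) 0 (m + 1)]
  exact two_mul_prod_sq_le_prod (Nat.nth_strictMono Nat.infinite_setOfPred_prime)
    Nat.nth_prime_zero_eq_two m
end

section
/- Let a ≥ 1 and b ≥ 1 be integers with p_a > b (p_a the a-th prime). Then the sum ∑_{j=1}^{n} ∏_{i=a}^{π(√j)} (1 - b/p_i) tends to infinity as n → ∞, where π is the prime counting function and an empty product equals 1. -/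
/-!
Chebyshev's bound gives `π(x) = o(x)`, hence `k = o(p_k)`, and summing `1/p_k = o(1/k)` shows
`∑_{k<m} 1/p_k = o(log m)`. Since `1 - x ≥ exp(-x/(1-c))` for `0 ≤ x ≤ c < 1`, the product
`∏_{i=a}^{m} (1 - b/p_i)` is at least `exp(-K ∑_{k<m} 1/p_k) = m^{-o(1)}`. The `j`-th term is
this product with `m = π(√j) ≤ j`, so the terms decrease and the `n`-th partial sum is at least
`n · n^{-o(1)} → ∞`.
-/

open Filter Finset Asymptotics Real

namespace Nat

theorem primeCounting_le_self (n : ℕ) : primeCounting n ≤ n := by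
  rw [← primesLE_card_eq_primeCounting, primesLE_eq_filter_Icc_one]
  exact (card_filter_le _ _).trans (by simp)

theorem primeCounting_nth_prime (k : ℕ) : primeCounting (nth Prime k) = k + 1 :=
  count_nth_succ_of_infinite infinite_setOfPred_prime k

theorem tendsto_nth_prime_atTop : Tendsto (nth Prime) atTop atTop :=
  (nth_strictMono infinite_setOfPred_prime).tendsto_atTop

theorem isLittleO_primeCounting :
    (fun n : ℕ => (primeCounting n : ℝ)) =o[atTop] fun n => (n : ℝ) := by
  have hbound : (fun x : ℝ => (primeCounting ⌊x⌋₊ : ℝ)) =O[atTop]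
      fun x => x * (Real.log x)⁻¹ := by
    refine IsBigO.of_bound (Real.log 4 + 1) ?_
    filter_upwards [Chebyshev.eventually_primeCounting_le one_pos, eventually_gt_atTop 1]
      with x hx hx1
    have : 0 < Real.log x := Real.log_pos hx1
    rw [norm_of_nonneg (by positivity), norm_of_nonneg (by positivity)]
    rwa [← div_eq_mul_inv, ← mul_div_assoc]
  have hinv : (fun x : ℝ => (Real.log x)⁻¹) =o[atTop] fun _ => (1 : ℝ) :=
    (isLittleO_one_iff ℝ).2 (tendsto_inv_atTop_zero.comp tendsto_log_atTop)
  simpa [Function.comp_def] using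
    (hbound.trans_isLittleO ((isBigO_refl id atTop).mul_isLittleO hinv)).comp_tendsto
      tendsto_natCast_atTop_atTop

theorem isLittleO_sum_range_inv_nth_prime :
    (fun m : ℕ => ∑ k ∈ range m, (nth Prime k : ℝ)⁻¹) =o[atTop] fun m => Real.log m := by
  have hsucc : (fun k : ℕ => (k : ℝ) + 1) =o[atTop] fun k => (nth Prime k : ℝ) := by
    simpa [Function.comp_def, primeCounting_nth_prime] using
      isLittleO_primeCounting.comp_tendsto tendsto_nth_prime_atTop
  have hinv : (fun k : ℕ => (nth Prime k : ℝ)⁻¹) =o[atTop] fun k => 1 / ((k : ℝ) + 1) := by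
    simpa only [one_div] using hsucc.inv_rev (.of_forall fun k hk => absurd hk (by positivity))
  have hharmonic : (fun m : ℕ => ∑ i ∈ range m, 1 / ((i : ℝ) + 1)) =O[atTop]
      fun m => Real.log m := by
    have hone : (fun _ : ℕ => (1 : ℝ)) =O[atTop] fun m => Real.log m :=
      ((isLittleO_one_left_iff ℝ).2 <| tendsto_norm_atTop_atTop.comp <|
        tendsto_log_atTop.comp tendsto_natCast_atTop_atTop).isBigO
    refine (IsBigO.of_bound 1 (.of_forall fun m => ?_)).trans (hone.add (isBigO_refl _ _))
    have hsum : ∑ i ∈ range m, 1 / ((i : ℝ) + 1) ≤ 1 + Real.log m := by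
      simpa [harmonic, one_div] using harmonic_le_one_add_log m
    have hlog := Real.log_natCast_nonneg m
    rw [norm_of_nonneg (by positivity), norm_of_nonneg (by positivity), one_mul]
    exact hsum
  exact (hinv.sum_range (fun i => by positivity)
    tendsto_sum_range_one_div_nat_succ_atTop).trans_isBigO hharmonic

end Nat

theorem Real.exp_neg_div_le_one_sub {x c : ℝ} (hx : 0 ≤ x) (hxc : x ≤ c) (hc : c < 1) :
    exp (-(x / (1 - c))) ≤ 1 - x := by
  have hpos : 0 < 1 - x := by linarith
  rw [← exp_log hpos, exp_le_exp]
  calc -(x / (1 - c)) ≤ -(x / (1 - x)) := by gcongr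
    _ = 1 - (1 - x)⁻¹ := by field_simp; ring
    _ ≤ log (1 - x) := one_sub_inv_le_log_of_pos hpos

theorem Real.exp_neg_sum_div_le_prod_one_sub {ι : Type*} {s : Finset ι} {x : ι → ℝ} {c : ℝ}
    (hx : ∀ i ∈ s, 0 ≤ x i ∧ x i ≤ c) (hc : c < 1) :
    exp (-(∑ i ∈ s, x i) / (1 - c)) ≤ ∏ i ∈ s, (1 - x i) := by
  rw [neg_div, sum_div, ← sum_neg_distrib, exp_sum]
  exact prod_le_prod (fun i _ => (exp_pos _).le)
    fun i hi => exp_neg_div_le_one_sub (hx i hi).1 (hx i hi).2 hc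

theorem Finset.antitone_prod_Icc {f : ℕ → ℝ} {a : ℕ}
    (hf : ∀ i, a ≤ i → 0 ≤ f i ∧ f i ≤ 1) :
    Antitone fun m => ∏ i ∈ Icc a m, f i := fun _ _ hmn =>
  prod_le_prod_of_subset_of_le_one (Icc_subset_Icc_right hmn)
    (fun i hi => (hf i (mem_Icc.1 hi).1).1) fun i hi _ => (hf i (mem_Icc.1 hi).1).2

theorem Finset.sum_Icc_comp_sub_one_le_sum_range {f : ℕ → ℝ} (hf : ∀ k, 0 ≤ f k) {a : ℕ}
    (ha : 1 ≤ a) (m : ℕ) : ∑ i ∈ Icc a m, f (i - 1) ≤ ∑ k ∈ range m, f k := by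
  rw [← sum_image (g := (· - 1)) fun i hi j hj hij => by
    simp only [coe_Icc, Set.mem_Icc] at hi hj hij; omega]
  exact sum_le_sum_of_subset_of_nonneg (fun k hk => by simp at hk ⊢; omega) fun k _ _ => hf k

theorem tendsto_natCast_mul_exp_neg_of_isLittleO {h : ℕ → ℝ}
    (hh : h =o[atTop] fun n => log n) : Tendsto (fun n : ℕ => n * exp (-h n)) atTop atTop := by
  have hlog : Tendsto (fun n : ℕ => log n) atTop atTop :=
    tendsto_log_atTop.comp tendsto_natCast_atTop_atTop
  refine (tendsto_exp_atTop.comp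
    ((IsEquivalent.refl.sub_isLittleO hh).symm.tendsto_atTop hlog)).congr' ?_
  filter_upwards [eventually_gt_atTop 0] with n hn
  simp [sub_eq_add_neg, exp_add, exp_log (Nat.cast_pos.2 hn)]

theorem tendsto_sum_Icc_comp_of_antitone {u : ℕ → ℝ} (hu : Antitone u) {g : ℕ → ℕ}
    (hg : ∀ n, g n ≤ n) (h : Tendsto (fun n : ℕ => n * u n) atTop atTop) :
    Tendsto (fun n => ∑ j ∈ Icc 1 n, u (g j)) atTop atTop := by
  refine tendsto_atTop_mono (fun n => ?_) h
  calc n * u n = ∑ j ∈ Icc 1 n, u n := by simp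
    _ ≤ ∑ j ∈ Icc 1 n, u (g j) :=
      sum_le_sum fun j hj => hu ((hg j).trans (mem_Icc.1 hj).2)

theorem div_nth_prime_sub_one_le (b : ℕ) {a i : ℕ} (hi : a ≤ i) :
    (b : ℝ) / Nat.nth Nat.Prime (i - 1) ≤ b / Nat.nth Nat.Prime (a - 1) :=
  div_le_div_of_nonneg_left b.cast_nonneg (mod_cast (Nat.prime_nth_prime _).pos)
    (mod_cast Nat.nth_monotone Nat.infinite_setOfPred_prime (by omega))

theorem exists_exp_neg_mul_sum_inv_nth_prime_le_prod {a b : ℕ} (ha : 1 ≤ a)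
    (hba : b < Nat.nth Nat.Prime (a - 1)) : ∃ K : ℝ, ∀ m : ℕ,
      exp (-(K * ∑ k ∈ range m, (Nat.nth Nat.Prime k : ℝ)⁻¹)) ≤
        ∏ i ∈ Icc a m, (1 - (b : ℝ) / Nat.nth Nat.Prime (i - 1)) := by
  set c : ℝ := b / Nat.nth Nat.Prime (a - 1)
  have hc : c < 1 := (div_lt_one (mod_cast (Nat.prime_nth_prime _).pos)).2 (mod_cast hba)
  refine ⟨b / (1 - c), fun m => ?_⟩
  have hsum := sum_Icc_comp_sub_one_le_sum_range
    (fun k => inv_nonneg.2 (Nat.nth Nat.Prime k).cast_nonneg) ha m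
  calc exp (-(b / (1 - c) * ∑ k ∈ range m, (Nat.nth Nat.Prime k : ℝ)⁻¹))
      ≤ exp (-(∑ i ∈ Icc a m, (b : ℝ) / Nat.nth Nat.Prime (i - 1)) / (1 - c)) := by
        rw [exp_le_exp, neg_div, neg_le_neg_iff, div_mul_eq_mul_div,
          div_le_div_iff_of_pos_right (by linarith)]
        simpa only [div_eq_mul_inv, mul_sum] using mul_le_mul_of_nonneg_left hsum b.cast_nonneg
    _ ≤ _ := exp_neg_sum_div_le_prod_one_sub
      (fun i hi => ⟨by positivity, div_nth_prime_sub_one_le b (mem_Icc.1 hi).1⟩) hc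

theorem stmt_15_general (a b : ℕ) (ha : 1 ≤ a)
    (hba : b < Nat.nth Nat.Prime (a - 1)) :
    Tendsto (fun n : ℕ =>
        ∑ j ∈ Finset.Icc 1 n,
          ∏ i ∈ Finset.Icc a (Nat.primeCounting (Nat.sqrt j)),
            (1 - (b : ℝ) / (Nat.nth Nat.Prime (i - 1) : ℝ)))
      atTop atTop := by
  have hc : (b : ℝ) / Nat.nth Nat.Prime (a - 1) < 1 :=
    (div_lt_one (mod_cast (Nat.prime_nth_prime _).pos)).2 (mod_cast hba)
  have hfactor (i : ℕ) (hi : a ≤ i) : 0 ≤ 1 - (b : ℝ) / Nat.nth Nat.Prime (i - 1) ∧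
      1 - (b : ℝ) / Nat.nth Nat.Prime (i - 1) ≤ 1 :=
    ⟨sub_nonneg.2 ((div_nth_prime_sub_one_le b hi).trans hc.le), sub_le_self _ (by positivity)⟩
  obtain ⟨K, hK⟩ := exists_exp_neg_mul_sum_inv_nth_prime_le_prod ha hba
  refine tendsto_sum_Icc_comp_of_antitone (antitone_prod_Icc hfactor)
    (fun n => (Nat.primeCounting_le_self _).trans (Nat.sqrt_le_self n)) ?_
  exact tendsto_atTop_mono (fun n => mul_le_mul_of_nonneg_left (hK n) n.cast_nonneg)
    (tendsto_natCast_mul_exp_neg_of_isLittleO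
      (Nat.isLittleO_sum_range_inv_nth_prime.const_mul_left K))

/-- For integers `a, b ≥ 1` with `p_a > b`, the sum
`∑_{j=1}^{n} ∏_{i=a}^{π(√j)} (1 - b/p_i)` tends to infinity as `n → ∞`
(`p_i` the `i`-th prime, `π` the prime counting function; empty products are `1`). -/
theorem stmt_15 (a b : ℕ) (ha : 1 ≤ a) (hb : 1 ≤ b)
    (hba : b < Nat.nth Nat.Prime (a - 1)) :
    Tendsto (fun n : ℕ =>
        ∑ j ∈ Finset.Icc 1 n,
          ∏ i ∈ Finset.Icc a (Nat.primeCounting (Nat.sqrt j)),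
            (1 - (b : ℝ) / (Nat.nth Nat.Prime (i - 1) : ℝ)))
      atTop atTop :=
  stmt_15_general a b ha hba
end
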